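/- Let μ, ν be degree-one polynomials over F_q, and let G ∈ F_q[x] have degree larger than 1 with deg(G) coprime to q. If both G and μ∘G∘ν are odd polynomials, then ν(0) = 0. -/

import Mathlib

/-!
Write `μ = a X + b` and `ν = c X + d`, and let `n = deg G`, which is odd because `G` is odd.
For `k ≠ 0` the `k`-th coefficient of `μ ∘ G ∘ ν` is `a c^k` times that of `G(X + d)`, and the
coefficient of `X^(n-1)` in `G(X + d)` is `G_(n-1) + n d G_n = n d G_n`. Since `n > 1` is odd,
`n - 1` is a nonzero even index, so `a c^(n-1) n d G_n = 0`; here `n ≠ 0` in `F_q` because `n` is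
coprime to `q`, hence `d = ν(0) = 0`.
-/

open Polynomial

namespace Polynomial

variable {R : Type*}

theorem odd_natDegree_of_coeff_eq_zero_of_even [Semiring R] {f : R[X]} (hf : f ≠ 0)
    (hodd : ∀ n, Even n → f.coeff n = 0) : Odd f.natDegree :=
  Nat.not_even_iff_odd.mp fun h => hf (leadingCoeff_eq_zero.mp (hodd _ h))

theorem coeff_taylor_natDegree_sub_one [CommSemiring R] (f : R[X]) (r : R) :
    (taylor r f).coeff (f.natDegree - 1) =
      f.coeff (f.natDegree - 1) + f.natDegree * r * f.leadingCoeff := by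
  obtain hn | hn := Nat.eq_zero_or_pos f.natDegree
  · rw [hn, Nat.cast_zero, zero_mul, zero_mul, add_zero, Nat.zero_sub, taylor_coeff_zero,
      eq_C_of_natDegree_eq_zero hn, eval_C, coeff_C_zero]
  have hdeg : (hasseDeriv (f.natDegree - 1) f).natDegree ≤ 1 :=
    (natDegree_hasseDeriv_le f _).trans (by omega)
  have hsucc : 1 + (f.natDegree - 1) = f.natDegree := by omega
  rw [taylor_coeff, eq_X_add_C_of_natDegree_le_one hdeg]
  simp only [hasseDeriv_coeff, zero_add, Nat.choose_self, hsucc, Nat.choose_symm hn,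
    Nat.choose_one_right, eval_add, eval_mul, eval_C, eval_X, Nat.cast_one, one_mul, leadingCoeff]
  ring

theorem coeff_comp_comp_C_mul_X_add_C [CommRing R] (a b c d : R) (G : R[X]) {k : ℕ}
    (hk : k ≠ 0) :
    (((C a * X + C b).comp G).comp (C c * X + C d)).coeff k =
      a * c ^ k * (taylor d G).coeff k := by
  have hlin : C c * X + C d = (X + C d).comp (C c * X) := by simp
  rw [hlin, ← comp_assoc, ← taylor_apply]
  simp only [add_comp, mul_comp, C_comp, X_comp, map_add, taylor_mul, taylor_C, coeff_add,
    coeff_C_mul, comp_C_mul_X_coeff, coeff_C, hk, if_false, add_zero]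
  ring

end Polynomial

theorem FiniteField.natCast_ne_zero_of_coprime_card {F : Type*} [Field F] [Fintype F] {n : ℕ}
    (h : n.Coprime (Fintype.card F)) : (n : F) ≠ 0 := by
  have := (Nat.isCoprime_iff_coprime.mpr h).map (Int.castRingHom F)
  simp only [eq_intCast, Int.cast_natCast, FiniteField.cast_card_eq_zero,
    isCoprime_zero_right] at this
  exact this.ne_zero

/-- If `μ, ν` are degree-one polynomials over the finite field `F` with `q` elements,
`deg G > 1` is coprime to `q`, and both `G` and `μ ∘ G ∘ ν` are odd polynomials,
then `ν(0) = 0`. -/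
theorem stmt_1 (q : ℕ) (F : Type*) [Field F] [Fintype F] (hq : Fintype.card F = q)
    (μ ν G : Polynomial F) (hμ : μ.degree = 1) (hν : ν.degree = 1)
    (hGdeg : 1 < G.natDegree) (hcop : Nat.Coprime G.natDegree q)
    (hGodd : ∀ n : ℕ, Even n → G.coeff n = 0)
    (hcompodd : ∀ n : ℕ, Even n → ((μ.comp G).comp ν).coeff n = 0) :
    ν.eval 0 = 0 := by
  have hG : G ≠ 0 := ne_zero_of_natDegree_gt hGdeg
  have heven : Even (G.natDegree - 1) :=
    Nat.Odd.sub_odd (odd_natDegree_of_coeff_eq_zero_of_even hG hGodd) odd_one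
  have hn : (G.natDegree : F) ≠ 0 := FiniteField.natCast_ne_zero_of_coprime_card (hq ▸ hcop)
  have hk : G.natDegree - 1 ≠ 0 := by omega
  have ha : μ.coeff 1 ≠ 0 := coeff_ne_zero_of_eq_degree hμ
  have hc : ν.coeff 1 ≠ 0 := coeff_ne_zero_of_eq_degree hν
  have hcoeff := hcompodd _ heven
  rw [eq_X_add_C_of_degree_le_one hμ.le, eq_X_add_C_of_degree_le_one hν.le,
    coeff_comp_comp_C_mul_X_add_C _ _ _ _ _ hk, coeff_taylor_natDegree_sub_one,
    hGodd _ heven, zero_add] at hcoeff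
  rw [← coeff_zero_eq_eval_zero]
  simpa [ha, hc, hn, hG] using hcoeff
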